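/- In the backward Riccati recursion, for every k = 0,…,N the matrix S(k) is symmetric positive semidefinite, and for every k = 0,…,N−1 the matrix H(k) = Quu + Bᵀ S(k+1) B is symmetric positive definite; in particular the recursion is well defined. -/

import Mathlib

/-!
`T ↦ Aᵀ T A + Qxx - (Aᵀ T B + Qxu) (Quu + Bᵀ T B)⁻¹ (Bᵀ T A + Qxuᵀ)` is the Schur complement of
the positive definite block `Quu + Bᵀ T B` in the block matrix `Q + [A B]ᵀ T [A B]`, which is
positive semidefinite whenever `T` is. Hence the Riccati map preserves positive semidefiniteness,
and backward induction from `S N = Q0` gives the claim for every `S k` and `H k`.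
-/

open Matrix

namespace Matrix

variable {m n p : Type*} [Fintype m] [Fintype n] [Fintype p]

theorem PosSemidef.transpose_mul_mul_same {T : Matrix m m ℝ} (hT : T.PosSemidef)
    (B : Matrix m n ℝ) : (Bᵀ * T * B).PosSemidef := by
  simpa using hT.conjTranspose_mul_mul_same B

theorem PosSemidef.fromBlocks_transpose_mul_mul_same {T : Matrix m m ℝ} (hT : T.PosSemidef)
    (A : Matrix m n ℝ) (B : Matrix m p ℝ) :
    (fromBlocks (Aᵀ * T * A) (Aᵀ * T * B) (Bᵀ * T * A) (Bᵀ * T * B)).PosSemidef := by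
  have h := hT.transpose_mul_mul_same (fromCols A B)
  rwa [transpose_fromCols, fromRows_mul, fromRows_mul_fromCols] at h

variable [DecidableEq p]

noncomputable def riccatiMap (A : Matrix n n ℝ) (B : Matrix n p ℝ) (Qxx : Matrix n n ℝ)
    (Qxu : Matrix n p ℝ) (Quu : Matrix p p ℝ) (T : Matrix n n ℝ) : Matrix n n ℝ :=
  Aᵀ * T * A + Qxx - (Aᵀ * T * B + Qxu) * (Quu + Bᵀ * T * B)⁻¹ * (Bᵀ * T * A + Qxuᵀ)

theorem riccatiMap_posSemidef {A : Matrix n n ℝ} {B : Matrix n p ℝ} {Qxx : Matrix n n ℝ}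
    {Qxu : Matrix n p ℝ} {Quu : Matrix p p ℝ}
    (hQ : (fromBlocks Qxx Qxu Qxuᵀ Quu).PosSemidef) (hQuu : Quu.PosDef)
    {T : Matrix n n ℝ} (hT : T.PosSemidef) :
    (riccatiMap A B Qxx Qxu Quu T).PosSemidef := by
  have hH : (Quu + Bᵀ * T * B).PosDef := hQuu.add_posSemidef (hT.transpose_mul_mul_same B)
  have hsum := hQ.add (hT.fromBlocks_transpose_mul_mul_same A B)
  have hTt : Tᵀ = T := by simpa [conjTranspose_eq_transpose_of_trivial] using hT.isHermitian.eq
  have hoff : Qxuᵀ + Bᵀ * T * A = (Qxu + Aᵀ * T * B)ᴴ := by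
    simp [transpose_add, transpose_mul, hTt, Matrix.mul_assoc]
  rw [fromBlocks_add, hoff] at hsum
  have := hH.isUnit.invertible
  have hschur := (PosDef.fromBlocks₂₂ _ _ hH).mp hsum
  rwa [← hoff, add_comm Qxx, add_comm Qxu, add_comm Qxuᵀ] at hschur

end Matrix

/-- in the backward Riccati recursion, every `S(k)` is symmetric positive
semidefinite and every `H(k) = Quu + Bᵀ S(k+1) B` is symmetric positive definite. -/
theorem stmt11 {n q : ℕ} (N : ℕ)
    (A : Matrix (Fin n) (Fin n) ℝ) (B : Matrix (Fin n) (Fin q) ℝ)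
    (Qxx : Matrix (Fin n) (Fin n) ℝ) (Qxu : Matrix (Fin n) (Fin q) ℝ)
    (Quu : Matrix (Fin q) (Fin q) ℝ)
    (hQ : (Matrix.fromBlocks Qxx Qxu Qxuᵀ Quu).PosSemidef) (hQuu : Quu.PosDef)
    (Q0 : Matrix (Fin n) (Fin n) ℝ) (hQ0 : Q0.PosSemidef)
    (S : ℕ → Matrix (Fin n) (Fin n) ℝ) (hSN : S N = Q0)
    (hSrec : ∀ k < N, S k = Aᵀ * S (k + 1) * A + Qxx -
      (Aᵀ * S (k + 1) * B + Qxu) * (Quu + Bᵀ * S (k + 1) * B)⁻¹ *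
        (Bᵀ * S (k + 1) * A + Qxuᵀ)) :
    (∀ k ≤ N, (S k).PosSemidef) ∧ (∀ k < N, (Quu + Bᵀ * S (k + 1) * B).PosDef) := by
  have hS : ∀ k ≤ N, (S k).PosSemidef := fun k hk =>
    Nat.decreasingInduction (motive := fun k _ => (S k).PosSemidef)
      (fun k hk hnext => hSrec k hk ▸ riccatiMap_posSemidef hQ hQuu hnext) (hSN ▸ hQ0) hk
  exact ⟨hS, fun k hk => hQuu.add_posSemidef ((hS (k + 1) hk).transpose_mul_mul_same B)⟩
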